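/- Let C be a category with all morphisms monic and let Ω be a universal homogeneous (equivalently universal f-injective) ind-object of C. Then every ind-object Ξ of C embeds into Ω, i.e., there is a morphism of ind-objects Ξ → Ω all of whose components are monic. -/

import Mathlib

/-!
Universality embeds `Ξ₀` into some stage of `Ω`. Given an embedding `Ξₙ → Ωₖ`, f-injectivity
applied along the transition map `Ξₙ → Ξₙ₊₁` extends it to an embedding `Ξₙ₊₁ → Ωₘ` with
`k ≤ m` making the square commute; iterating gives a morphism of ind-objects, since
commuting squares for consecutive indices compose to all of its naturality squares.
Its components are monic because every morphism of `C` is.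
-/

open CategoryTheory

universe u v

/-- An ind-object of a category `C`: a sequential diagram `X₁ → X₂ → ⋯` in `C`. -/
structure IndObject (C : Type u) [Category.{v} C] where
  obj : ℕ → C
  map : ∀ n : ℕ, obj n ⟶ obj (n + 1)

namespace IndObject

variable {C : Type u} [Category.{v} C]

/-- The transition morphism `obj n ⟶ obj m` of an ind-object, for `n ≤ m`. -/
def trans (Ω : IndObject C) : ∀ {n m : ℕ}, n ≤ m → (Ω.obj n ⟶ Ω.obj m) :=
  fun {n m} h =>
    Nat.leRecOn (C := fun m => Ω.obj n ⟶ Ω.obj m) h (fun {l} g => g ≫ Ω.map l) (𝟙 _)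

/-- An ind-object is universal if every object of `C` embeds into it. -/
def Universal (Ω : IndObject C) : Prop :=
  ∀ X : C, ∃ n : ℕ, Nonempty (X ⟶ Ω.obj n)

/-- An ind-object is f-injective if every embedding of an object of `C` into it extends
along any morphism of `C`. -/
def FInjective (Ω : IndObject C) : Prop :=
  ∀ ⦃X Y : C⦄ (α : X ⟶ Y) (n : ℕ) (γ : X ⟶ Ω.obj n),
    ∃ (m : ℕ) (h : n ≤ m) (β : Y ⟶ Ω.obj m), α ≫ β = γ ≫ Ω.trans h

end IndObject


/-- A morphism of ind-objects `Ξ → Ω`. -/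
structure IndHom {C : Type u} [Category.{v} C] (Ξ Ω : IndObject C) where
  a : ℕ → ℕ
  amono : Monotone a
  app : ∀ n : ℕ, Ξ.obj n ⟶ Ω.obj (a n)
  comm : ∀ {n m : ℕ} (h : n ≤ m), Ξ.trans h ≫ app m = app n ≫ Ω.trans (amono h)

namespace IndObject

variable {C : Type u} [Category.{v} C] (Ω : IndObject C)

@[simp]
theorem trans_refl (n : ℕ) : Ω.trans (le_refl n) = 𝟙 _ :=
  Nat.leRecOn_self _

theorem trans_succ {n m : ℕ} (h : n ≤ m) :
    Ω.trans (h.trans m.le_succ) = Ω.trans h ≫ Ω.map m :=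
  Nat.leRecOn_succ _ _

theorem trans_comp_trans {n m k : ℕ} (hnm : n ≤ m) (hmk : m ≤ k) :
    Ω.trans hnm ≫ Ω.trans hmk = Ω.trans (hnm.trans hmk) := by
  induction hmk with
  | refl => simp
  | step hmk ih => rw [trans_succ _ hmk, trans_succ _ (hnm.trans hmk), ← Category.assoc, ih]

end IndObject

namespace IndHom

variable {C : Type u} [Category.{v} C] {Ξ Ω : IndObject C}

def ofSucc (a : ℕ → ℕ) (ha : ∀ n, a n ≤ a (n + 1)) (app : ∀ n, Ξ.obj n ⟶ Ω.obj (a n))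
    (w : ∀ n, Ξ.map n ≫ app (n + 1) = app n ≫ Ω.trans (ha n)) : IndHom Ξ Ω where
  a := a
  amono := monotone_nat_of_le_succ ha
  app := app
  comm {n m} h := by
    induction h with
    | refl => simp
    | step h ih =>
      rw [Ξ.trans_succ h, Category.assoc, w, ← Category.assoc, ih, Category.assoc,
        Ω.trans_comp_trans]

end IndHom

theorem IndObject.FInjective.nonempty_indHom {C : Type u} [Category.{v} C] {Ω : IndObject C}
    (hΩ : Ω.FInjective) (Ξ : IndObject C) {k : ℕ} (f₀ : Ξ.obj 0 ⟶ Ω.obj k) :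
    Nonempty (IndHom Ξ Ω) := by
  choose m hm β hβ using fun n (f : Σ k, Ξ.obj n ⟶ Ω.obj k) => hΩ (Ξ.map n) f.1 f.2
  let f : ∀ n, Σ k, Ξ.obj n ⟶ Ω.obj k :=
    fun n => Nat.rec ⟨k, f₀⟩ (fun n f => ⟨m n f, β n f⟩) n
  exact ⟨.ofSucc (fun n => (f n).1) (fun n => hm n (f n)) (fun n => (f n).2)
    (fun n => hβ n (f n))⟩

/-- every ind-object embeds into a universal homogeneous (equivalently
universal f-injective) ind-object, via a morphism of ind-objects with monic components. -/
theorem stmt_13 (C : Type u) [Category.{v} C]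
    (hmono : ∀ {X Y : C} (f : X ⟶ Y), Mono f)
    (Ω : IndObject C) (huniv : Ω.Universal) (hfinj : Ω.FInjective)
    (Ξ : IndObject C) :
    ∃ φ : IndHom Ξ Ω, ∀ n : ℕ, Mono (φ.app n) := by
  obtain ⟨k, ⟨f₀⟩⟩ := huniv (Ξ.obj 0)
  obtain ⟨φ⟩ := hfinj.nonempty_indHom Ξ f₀
  exact ⟨φ, fun n => hmono _⟩
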